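/- arXiv:1909.08347 — 6 statements merged into one kernel-verified Lean document; each statement's English description precedes it below -/
import Mathlib

section
/- Let n be an odd positive integer. Then for every i ∈ {1, …, n}, the number of j ∈ {1, …, n} with Paired(i,j) equals (n−1)/2, and the number of j ∈ {1, …, n} with Paired(j,i) also equals (n−1)/2. -/
/-- The predicate `Paired(i,j)` from the KRE protocols. -/
def Paired (i j : ℕ) : Prop :=
  (Odd i ∧ i > j ∧ Odd j) ∨ (Odd i ∧ i < j ∧ Even j) ∨
  (Even i ∧ i > j ∧ Even j) ∨ (Even i ∧ i < j ∧ Odd j)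

instance : ∀ i, DecidablePred (Paired i) := fun _ _ => by
  unfold Paired; infer_instance

/-- number of odd numbers in `[a,b]`. -/
lemma count_odd_Icc (a b : ℕ) :
    ((Finset.Icc a b).filter (fun j => j % 2 = 1)).card = (b + 1) / 2 - a / 2 := by
  induction b with
  | zero =>
    rcases Nat.eq_zero_or_pos a with rfl | ha
    · decide
    · rw [Finset.Icc_eq_empty (by omega)]
      simp only [Finset.filter_empty, Finset.card_empty]
      omega
  | succ b ih =>
    rcases le_or_gt a (b + 1) with h | h
    · rw [← Finset.insert_Icc_right_eq_Icc_add_one h, Finset.filter_insert]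
      rcases Nat.even_or_odd (b + 1) with he | ho
      · have hb : (b + 1) % 2 = 0 := Nat.even_iff.mp he
        rw [if_neg (by omega), ih]
        omega
      · have hb : (b + 1) % 2 = 1 := Nat.odd_iff.mp ho
        rw [if_pos hb, Finset.card_insert_of_notMem (by simp), ih]
        omega
    · rw [Finset.Icc_eq_empty (by omega)]
      simp only [Finset.filter_empty, Finset.card_empty]
      omega

/-- number of even numbers in `[a,b]`. -/
lemma count_even_Icc (a b : ℕ) :
    ((Finset.Icc a b).filter (fun j => j % 2 = 0)).card = b / 2 + 1 - (a + 1) / 2 := by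
  induction b with
  | zero =>
    rcases Nat.eq_zero_or_pos a with rfl | ha
    · decide
    · rw [Finset.Icc_eq_empty (by omega)]
      simp only [Finset.filter_empty, Finset.card_empty]
      omega
  | succ b ih =>
    rcases le_or_gt a (b + 1) with h | h
    · rw [← Finset.insert_Icc_right_eq_Icc_add_one h, Finset.filter_insert]
      rcases Nat.even_or_odd (b + 1) with he | ho
      · have hb : (b + 1) % 2 = 0 := Nat.even_iff.mp he
        rw [if_pos hb, Finset.card_insert_of_notMem (by simp), ih]
        omega
      · have hb : (b + 1) % 2 = 1 := Nat.odd_iff.mp ho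
        rw [if_neg (by omega), ih]
        omega
    · rw [Finset.Icc_eq_empty (by omega)]
      simp only [Finset.filter_empty, Finset.card_empty]
      omega

lemma count_lt (n i : ℕ) (r : ℕ) (h2 : i ≤ n) :
    ((Finset.Icc 1 n).filter (fun j => j < i ∧ j % 2 = r)).card
      = ((Finset.Icc 1 (i - 1)).filter (fun j => j % 2 = r)).card := by
  congr 1
  ext j
  simp only [Finset.mem_filter, Finset.mem_Icc]
  omega

lemma count_gt (n i : ℕ) (r : ℕ) (h1 : 1 ≤ i) :
    ((Finset.Icc 1 n).filter (fun j => i < j ∧ j % 2 = r)).card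
      = ((Finset.Icc (i + 1) n).filter (fun j => j % 2 = r)).card := by
  congr 1
  ext j
  simp only [Finset.mem_filter, Finset.mem_Icc]
  omega

lemma card_split (n i : ℕ) (P Q : ℕ → Prop) [DecidablePred P] [DecidablePred Q] :
    ((Finset.Icc 1 n).filter (fun j => (j < i ∧ P j) ∨ (i < j ∧ Q j))).card
      = ((Finset.Icc 1 n).filter (fun j => j < i ∧ P j)).card
        + ((Finset.Icc 1 n).filter (fun j => i < j ∧ Q j)).card := by
  rw [Finset.filter_or, Finset.card_union_of_disjoint]
  rw [Finset.disjoint_left]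
  intro x hx hy
  simp only [Finset.mem_filter] at hx hy
  omega

theorem stmt_7 (n : ℕ) (hn : 0 < n) (hodd : Odd n)
    (i : ℕ) (hi : i ∈ Finset.Icc 1 n) :
    ((Finset.Icc 1 n).filter (fun j => Paired i j)).card = (n - 1) / 2 ∧
    ((Finset.Icc 1 n).filter (fun j => Paired j i)).card = (n - 1) / 2 := by
  rw [Finset.mem_Icc] at hi
  obtain ⟨h1, h2⟩ := hi
  have hn2 : n % 2 = 1 := Nat.odd_iff.mp hodd
  have hhead : (Finset.Icc 1 n).filter (fun j => Paired i j)
      = (Finset.Icc 1 n).filter (fun j => (j < i ∧ j % 2 = i % 2) ∨ (i < j ∧ j % 2 = (i + 1) % 2)) := by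
    apply Finset.filter_congr
    intro j _
    simp only [Paired, Nat.odd_iff, Nat.even_iff, gt_iff_lt]
    constructor
    · rintro (⟨a, b, c⟩ | ⟨a, b, c⟩ | ⟨a, b, c⟩ | ⟨a, b, c⟩) <;> omega
    · rintro (⟨a, b⟩ | ⟨a, b⟩) <;> omega
  have htail : (Finset.Icc 1 n).filter (fun j => Paired j i)
      = (Finset.Icc 1 n).filter (fun j => (j < i ∧ j % 2 = (i + 1) % 2) ∨ (i < j ∧ j % 2 = i % 2)) := by
    apply Finset.filter_congr
    intro j _
    simp only [Paired, Nat.odd_iff, Nat.even_iff, gt_iff_lt]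
    constructor
    · rintro (⟨a, b, c⟩ | ⟨a, b, c⟩ | ⟨a, b, c⟩ | ⟨a, b, c⟩) <;> omega
    · rintro (⟨a, b⟩ | ⟨a, b⟩) <;> omega
  rw [hhead, htail, card_split, card_split, count_lt n i _ h2, count_lt n i _ h2,
    count_gt n i _ h1, count_gt n i _ h1]
  rcases Nat.even_or_odd i with hie | hio
  · have hi2 : i % 2 = 0 := Nat.even_iff.mp hie
    have hi3 : (i + 1) % 2 = 1 := by omega
    simp only [hi2, hi3]
    rw [count_even_Icc, count_odd_Icc, count_odd_Icc, count_even_Icc]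
    omega
  · have hi2 : i % 2 = 1 := Nat.odd_iff.mp hio
    have hi3 : (i + 1) % 2 = 0 := by omega
    simp only [hi2, hi3]
    rw [count_odd_Icc, count_even_Icc, count_even_Icc, count_odd_Icc]
    omega
end

section
/- Let n be an even positive integer. Then for every i ∈ {1, …, n}: if i is odd then #head_i = n/2 and #tail_i = n/2 − 1; and if i is even then #head_i = n/2 − 1 and #tail_i = n/2. -/
lemma parity_count (a : ℕ) : ∀ b : ℕ,
    ((Finset.Ioc a b).filter (fun j => Even j)).card = b/2 - a/2 ∧
    ((Finset.Ioc a b).filter (fun j => Odd j)).card = (b+1)/2 - (a+1)/2 := by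
  intro b
  induction b with
  | zero =>
    constructor <;> · rw [Finset.Ioc_eq_empty (by omega)]; simp
  | succ b ih =>
    by_cases hab : b + 1 ≤ a
    · constructor <;> · rw [Finset.Ioc_eq_empty (by omega)]; simp; omega
    · have hins : Finset.Ioc a (b+1) = insert (b+1) (Finset.Ioc a b) := by
        ext j; simp [Finset.mem_Ioc]; omega
      have hnm : b + 1 ∉ Finset.Ioc a b := by simp
      rcases Nat.even_or_odd (b+1) with h | h
      · obtain ⟨k, hk⟩ := h
        constructor
        · rw [hins, Finset.filter_insert, if_pos (by exact ⟨k, hk⟩),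
            Finset.card_insert_of_notMem (by simp [hnm])]
          omega
        · rw [hins, Finset.filter_insert, if_neg (by simp [Nat.not_odd_iff_even.mpr ⟨k, hk⟩])]
          omega
      · obtain ⟨k, hk⟩ := h
        constructor
        · rw [hins, Finset.filter_insert, if_neg (by simp [Nat.not_even_iff_odd.mpr ⟨k, hk⟩])]
          omega
        · rw [hins, Finset.filter_insert, if_pos (by exact ⟨k, hk⟩),
            Finset.card_insert_of_notMem (by simp [hnm])]
          omega

theorem stmt_8 (n : ℕ) (hn : 0 < n) (heven : Even n)
    (i : ℕ) (hi : i ∈ Finset.Icc 1 n) :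
    (Odd i →
      ((Finset.Icc 1 n).filter (fun j => Paired i j)).card = n / 2 ∧
      ((Finset.Icc 1 n).filter (fun j => Paired j i)).card = n / 2 - 1) ∧
    (Even i →
      ((Finset.Icc 1 n).filter (fun j => Paired i j)).card = n / 2 - 1 ∧
      ((Finset.Icc 1 n).filter (fun j => Paired j i)).card = n / 2) := by
  simp only [Finset.mem_Icc] at hi
  have hn2 : n % 2 = 0 := Nat.even_iff.mp heven
  constructor
  · intro hoi
    have hi2 : i % 2 = 1 := Nat.odd_iff.mp hoi
    constructor
    · have hset : (Finset.Icc 1 n).filter (fun j => Paired i j) =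
          ((Finset.Ioc 0 (i-1)).filter (fun j => Odd j)) ∪
          ((Finset.Ioc i n).filter (fun j => Even j)) := by
        ext j
        simp [Paired, Nat.odd_iff, Nat.even_iff, Finset.mem_Ioc, Finset.mem_Icc]
        omega
      rw [hset, Finset.card_union_of_disjoint (by
        rw [Finset.disjoint_left]; intro j hj hj'
        simp [Nat.odd_iff, Nat.even_iff, Finset.mem_Ioc] at hj hj'; omega),
        (parity_count 0 (i-1)).2, (parity_count i n).1]
      omega
    · have hset : (Finset.Icc 1 n).filter (fun j => Paired j i) =
          ((Finset.Ioc 0 (i-1)).filter (fun j => Even j)) ∪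
          ((Finset.Ioc i n).filter (fun j => Odd j)) := by
        ext j
        simp [Paired, Nat.odd_iff, Nat.even_iff, Finset.mem_Ioc, Finset.mem_Icc]
        omega
      rw [hset, Finset.card_union_of_disjoint (by
        rw [Finset.disjoint_left]; intro j hj hj'
        simp [Nat.odd_iff, Nat.even_iff, Finset.mem_Ioc] at hj hj'; omega),
        (parity_count 0 (i-1)).1, (parity_count i n).2]
      omega
  · intro hei
    have hi2 : i % 2 = 0 := Nat.even_iff.mp hei
    constructor
    · have hset : (Finset.Icc 1 n).filter (fun j => Paired i j) =
          ((Finset.Ioc 0 (i-1)).filter (fun j => Even j)) ∪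
          ((Finset.Ioc i n).filter (fun j => Odd j)) := by
        ext j
        simp [Paired, Nat.odd_iff, Nat.even_iff, Finset.mem_Ioc, Finset.mem_Icc]
        omega
      rw [hset, Finset.card_union_of_disjoint (by
        rw [Finset.disjoint_left]; intro j hj hj'
        simp [Nat.odd_iff, Nat.even_iff, Finset.mem_Ioc] at hj hj'; omega),
        (parity_count 0 (i-1)).1, (parity_count i n).2]
      omega
    · have hset : (Finset.Icc 1 n).filter (fun j => Paired j i) =
          ((Finset.Ioc 0 (i-1)).filter (fun j => Odd j)) ∪
          ((Finset.Ioc i n).filter (fun j => Even j)) := by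
        ext j
        simp [Paired, Nat.odd_iff, Nat.even_iff, Finset.mem_Ioc, Finset.mem_Icc]
        omega
      rw [hset, Finset.card_union_of_disjoint (by
        rw [Finset.disjoint_left]; intro j hj hj'
        simp [Nat.odd_iff, Nat.even_iff, Finset.mem_Ioc] at hj hj'; omega),
        (parity_count 0 (i-1)).2, (parity_count i n).1]
      omega
end

section
/- Let μ ≥ 1 and let x and y be μ-bit integers with bit representations x_μ … x_1 and y_μ … y_1. Let u_1, …, u_μ and v_1, …, v_μ be natural numbers satisfying: for each l, if x_l = 1 then u_l = Σ_{h=l}^{μ} x_h·2^{h−l} (the integer with bit string x_μ … x_l), and if x_l = 0 then u_l is an odd number with 2^μ ≤ u_l < 2^{μ+1}; for each l, if y_l = 0 then v_l = 1 + Σ_{h=l+1}^{μ} y_h·2^{h−l} (the integer with bit string y_μ … y_{l+1} 1), and if y_l = 1 then v_l is an even number with 2^μ ≤ v_l < 2^{μ+1}. Then x > y if and only if there exists a unique index l ∈ {1, …, μ} with u_l = v_l (equivalently, the vector (u_l − v_l)_{l=1}^{μ} has a unique position equal to 0). -/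
open Finset

private lemma sum_two_pow_lt' (n : ℕ) : ∑ k ∈ range n, 2 ^ k < 2 ^ n := by
  induction n with
  | zero => simp
  | succ n ih => rw [sum_range_succ, pow_succ]; omega

/-- suffix value: bits of `c` from position `i+1` up to `μ`. -/
private def ltS (c : ℕ → ℕ) (μ i : ℕ) : ℕ := ∑ k ∈ range (μ - i), c (i + 1 + k) * 2 ^ k

private lemma ltS_lt (c : ℕ → ℕ) (hc : ∀ l, c l ≤ 1) (μ i : ℕ) : ltS c μ i < 2 ^ (μ - i) := by
  have h1 : ltS c μ i ≤ ∑ k ∈ range (μ - i), 2 ^ k := by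
    apply sum_le_sum
    intro k _
    have := hc (i + 1 + k)
    calc c (i + 1 + k) * 2 ^ k ≤ 1 * 2 ^ k := Nat.mul_le_mul_right _ this
      _ = 2 ^ k := one_mul _
  exact lt_of_le_of_lt h1 (sum_two_pow_lt' _)

private lemma ltS_rec (c : ℕ → ℕ) (μ i : ℕ) (h : i < μ) :
    ltS c μ i = c (i + 1) + 2 * ltS c μ (i + 1) := by
  unfold ltS
  have h1 : μ - i = (μ - (i + 1)) + 1 := by omega
  rw [h1, sum_range_succ', add_comm, Finset.mul_sum]
  congr 1
  · simp
  · apply sum_congr rfl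
    intro k _
    have h2 : i + 1 + (k + 1) = i + 1 + 1 + k := by omega
    rw [h2, pow_succ]; ring

private lemma ltS_exist (c d : ℕ → ℕ) (hc : ∀ l, c l ≤ 1) (hd : ∀ l, d l ≤ 1) (μ : ℕ) :
    ∀ dd s, s + dd = μ → ltS d μ s < ltS c μ s →
    ∃ i, s ≤ i ∧ i < μ ∧ c (i + 1) = 1 ∧ d (i + 1) = 0 ∧ ltS c μ (i + 1) = ltS d μ (i + 1) := by
  intro dd
  induction dd with
  | zero =>
    intro s hs h
    exfalso
    have h1 : ltS c μ s = 0 := by unfold ltS; simp [show μ - s = 0 by omega]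
    omega
  | succ n ih =>
    intro s hs h
    have hsμ : s < μ := by omega
    have h1 := ltS_rec c μ s hsμ
    have h2 := ltS_rec d μ s hsμ
    rcases lt_trichotomy (ltS d μ (s + 1)) (ltS c μ (s + 1)) with hlt | heq | hgt
    · obtain ⟨i, hi1, hi2, hrest⟩ := ih (s + 1) (by omega) hlt
      exact ⟨i, by omega, hi2, hrest⟩
    · have hcb := hc (s + 1); have hdb := hd (s + 1)
      exact ⟨s, le_refl _, hsμ, by omega, by omega, by omega⟩
    · exfalso; have hcb := hc (s + 1); have hdb := hd (s + 1); omega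

private lemma ltS_down (c d : ℕ → ℕ) (hd : ∀ l, d l ≤ 1) (μ : ℕ) :
    ∀ dd j, j + dd ≤ μ → ltS d μ (j + dd) < ltS c μ (j + dd) → ltS d μ j < ltS c μ j := by
  intro dd
  induction dd with
  | zero => intro j _ h; simpa using h
  | succ n ih =>
    intro j hj h
    have h' : ltS d μ (j + 1) < ltS c μ (j + 1) := by
      apply ih (j + 1) (by omega)
      have e : j + 1 + n = j + (n + 1) := by omega
      rw [e]; exact h
    have h1 := ltS_rec c μ j (by omega)
    have h2 := ltS_rec d μ j (by omega)
    have hdb := hd (j + 1)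
    omega

private lemma ltS_rev (c d : ℕ → ℕ) (hc : ∀ l, c l ≤ 1) (hd : ∀ l, d l ≤ 1) (μ i : ℕ)
    (hi : i < μ) (h1 : c (i + 1) = 1) (h2 : d (i + 1) = 0)
    (h3 : ltS c μ (i + 1) = ltS d μ (i + 1)) :
    ltS d μ 0 < ltS c μ 0 := by
  have hri := ltS_rec c μ i hi
  have hri' := ltS_rec d μ i hi
  have hQ : ltS d μ i < ltS c μ i := by omega
  have := ltS_down c d hd μ i 0 (by omega) (by simpa using hQ)
  simpa using this

private lemma ltS_uniq (c d : ℕ → ℕ) (hd : ∀ l, d l ≤ 1) (μ l l' : ℕ)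
    (h1 : 1 ≤ l) (h2 : l < l') (h3 : l' ≤ μ)
    (hQ : ltS c μ l = ltS d μ l)
    (hc1 : c l' = 1) (hd0 : d l' = 0) (hQ' : ltS c μ l' = ltS d μ l') : False := by
  have hr := ltS_rec c μ (l' - 1) (by omega)
  have hr' := ltS_rec d μ (l' - 1) (by omega)
  rw [show l' - 1 + 1 = l' by omega] at hr hr'
  have h5 : ltS d μ (l' - 1) < ltS c μ (l' - 1) := by omega
  have := ltS_down c d hd μ (l' - 1 - l) l (by omega)
    (by rw [show l + (l' - 1 - l) = l' - 1 by omega]; exact h5)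
  omega

theorem stmt_12 (μ : ℕ) (hμ : 1 ≤ μ) (xb yb u v : ℕ → ℕ)
    (hxb : ∀ l, xb l ≤ 1) (hyb : ∀ l, yb l ≤ 1)
    (x y : ℕ)
    (hx : x = ∑ l ∈ Finset.Icc 1 μ, xb l * 2 ^ (l - 1))
    (hy : y = ∑ l ∈ Finset.Icc 1 μ, yb l * 2 ^ (l - 1))
    (hu1 : ∀ l ∈ Finset.Icc 1 μ, xb l = 1 →
      u l = ∑ h ∈ Finset.Icc l μ, xb h * 2 ^ (h - l))
    (hu0 : ∀ l ∈ Finset.Icc 1 μ, xb l = 0 →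
      Odd (u l) ∧ 2 ^ μ ≤ u l ∧ u l < 2 ^ (μ + 1))
    (hv0 : ∀ l ∈ Finset.Icc 1 μ, yb l = 0 →
      v l = 1 + ∑ h ∈ Finset.Icc (l + 1) μ, yb h * 2 ^ (h - l))
    (hv1 : ∀ l ∈ Finset.Icc 1 μ, yb l = 1 →
      Even (v l) ∧ 2 ^ μ ≤ v l ∧ v l < 2 ^ (μ + 1)) :
    x > y ↔ ∃! l, l ∈ Finset.Icc 1 μ ∧ u l = v l := by
  -- reindexing lemmas
  have hsum : ∀ (c : ℕ → ℕ), ∑ l ∈ Finset.Icc 1 μ, c l * 2 ^ (l - 1) = ltS c μ 0 := by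
    intro c
    rw [show Finset.Icc 1 μ = Finset.Ico 1 (μ + 1) from (Finset.Ico_add_one_right_eq_Icc _ _).symm,
      Finset.sum_Ico_eq_sum_range]
    unfold ltS
    apply sum_congr (by congr 1)
    intro k _
    have e1 : 0 + 1 + k = 1 + k := by omega
    have e2 : 1 + k - 1 = k := by omega
    rw [e1, e2]
  have hU : ∀ l, 1 ≤ l → ∑ h ∈ Finset.Icc l μ, xb h * 2 ^ (h - l) = ltS xb μ (l - 1) := by
    intro l h1
    rw [show Finset.Icc l μ = Finset.Ico l (μ + 1) from (Finset.Ico_add_one_right_eq_Icc _ _).symm,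
      Finset.sum_Ico_eq_sum_range]
    unfold ltS
    apply sum_congr (by congr 1; omega)
    intro k _
    have e1 : l - 1 + 1 + k = l + k := by omega
    have e2 : l + k - l = k := by omega
    rw [e1, e2]
  have hV : ∀ l, ∑ h ∈ Finset.Icc (l + 1) μ, yb h * 2 ^ (h - l) = 2 * ltS yb μ l := by
    intro l
    rw [show Finset.Icc (l + 1) μ = Finset.Ico (l + 1) (μ + 1) from (Finset.Ico_add_one_right_eq_Icc _ _).symm,
      Finset.sum_Ico_eq_sum_range]
    unfold ltS
    rw [Finset.mul_sum]
    apply sum_congr (by congr 1; omega)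
    intro k _
    have e : l + 1 + k - l = k + 1 := by omega
    rw [e, pow_succ]; ring
  -- local comparison of encodings
  have key : ∀ l, 1 ≤ l → l ≤ μ →
      (u l = v l ↔ (xb l = 1 ∧ yb l = 0 ∧ ltS xb μ l = ltS yb μ l)) := by
    intro l h1 h2
    have hlm : l ∈ Finset.Icc 1 μ := by simp only [mem_Icc]; omega
    have hSy := ltS_lt yb hyb μ l
    have hpow : 2 * 2 ^ (μ - l) ≤ 2 ^ μ := by
      have h : (2:ℕ) ^ (μ - l + 1) ≤ 2 ^ μ := Nat.pow_le_pow_right (by norm_num) (by omega)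
      rwa [pow_succ, mul_comm] at h
    rcases Nat.le_one_iff_eq_zero_or_eq_one.mp (hxb l) with hx0 | hx1
    · obtain ⟨hodd, hge, _⟩ := hu0 l hlm hx0
      have hum : u l % 2 = 1 := Nat.odd_iff.mp hodd
      constructor
      · intro he
        exfalso
        rcases Nat.le_one_iff_eq_zero_or_eq_one.mp (hyb l) with hy0 | hy1
        · have hv := hv0 l hlm hy0
          rw [hV l] at hv
          omega
        · have := Nat.even_iff.mp (hv1 l hlm hy1).1
          omega
      · rintro ⟨h, _, _⟩; omega
    · have hul := hu1 l hlm hx1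
      rw [hU l h1] at hul
      have hrec := ltS_rec xb μ (l - 1) (by omega)
      rw [show l - 1 + 1 = l by omega] at hrec
      rw [hrec, hx1] at hul
      rcases Nat.le_one_iff_eq_zero_or_eq_one.mp (hyb l) with hy0 | hy1
      · have hv := hv0 l hlm hy0
        rw [hV l] at hv
        constructor
        · intro he; exact ⟨hx1, hy0, by omega⟩
        · rintro ⟨_, _, hS⟩; omega
      · have hev := Nat.even_iff.mp (hv1 l hlm hy1).1
        constructor
        · intro he; omega
        · rintro ⟨_, hy', _⟩; omega
  have hx' : x = ltS xb μ 0 := by rw [hx, hsum]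
  have hy' : y = ltS yb μ 0 := by rw [hy, hsum]
  constructor
  · intro hgt
    have h0 : ltS yb μ 0 < ltS xb μ 0 := by omega
    obtain ⟨i, _, hiμ, hc1, hd0, hS⟩ := ltS_exist xb yb hxb hyb μ μ 0 (by omega) h0
    refine ⟨i + 1, ⟨by simp only [mem_Icc]; omega, ?_⟩, ?_⟩
    · rw [key (i + 1) (by omega) (by omega)]
      exact ⟨hc1, hd0, hS⟩
    · rintro l' ⟨hl', he'⟩
      simp only [mem_Icc] at hl'
      rw [key l' (by omega) (by omega)] at he'
      obtain ⟨hc1', hd0', hS'⟩ := he'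
      by_contra hne
      rcases Nat.lt_or_ge l' (i + 1) with hlt | hge
      · exact ltS_uniq xb yb hyb μ l' (i + 1) (by omega) (by omega) (by omega) hS' hc1 hd0 hS
      · exact ltS_uniq xb yb hyb μ (i + 1) l' (by omega) (by omega) (by omega) hS hc1' hd0' hS'
  · rintro ⟨l, ⟨hl, he⟩, _⟩
    simp only [mem_Icc] at hl
    rw [key l hl.1 hl.2] at he
    obtain ⟨hc1, hd0, hS⟩ := he
    have := ltS_rev xb yb hxb hyb μ (l - 1) (by omega)
      (by rwa [show l - 1 + 1 = l by omega]) (by rwa [show l - 1 + 1 = l by omega])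
      (by rw [show l - 1 + 1 = l by omega]; exact hS)
    omega
end

section
/- Let μ ≥ 1 and let x and y be μ-bit integers with bit representations x_μ … x_1 and y_μ … y_1. For u ∈ {1, …, μ} define the integer z_u = −1 + x_u − y_u + 3·Σ_{v=u+1}^{μ} (x_v ⊕ y_v). Then there exists u ∈ {1, …, μ} with z_u = 0 if and only if x > y. -/
private lemma geomIcc (k : ℕ) : ∑ l ∈ Finset.Icc 1 k, (2:ℤ)^(l-1) = 2^k - 1 := by
  induction k with
  | zero => simp
  | succ n ih =>
    rw [Finset.sum_Icc_succ_top (by omega : 1 ≤ n + 1), ih]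
    have h : n + 1 - 1 = n := rfl
    rw [h, pow_succ]
    ring

private lemma absBound (D : ℕ → ℤ) (hD : ∀ l, |D l| ≤ 1) (k : ℕ) :
    |∑ l ∈ Finset.Icc 1 k, D l * 2^(l-1)| ≤ 2^k - 1 := by
  calc |∑ l ∈ Finset.Icc 1 k, D l * 2^(l-1)|
      ≤ ∑ l ∈ Finset.Icc 1 k, |D l * 2^(l-1)| := Finset.abs_sum_le_sum_abs _ _
    _ ≤ ∑ l ∈ Finset.Icc 1 k, (2:ℤ)^(l-1) := by
        apply Finset.sum_le_sum
        intro l _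
        rw [abs_mul, abs_pow, abs_two]
        calc |D l| * 2^(l-1) ≤ 1 * 2^(l-1) :=
              mul_le_mul_of_nonneg_right (hD l) (by positivity)
          _ = 2^(l-1) := one_mul _
    _ = 2^k - 1 := geomIcc k

private lemma splitSum (xb yb : ℕ → ℕ) (μ u : ℕ) (hu1 : 1 ≤ u) (huμ : u ≤ μ)
    (heq : ∀ v, u < v → v ≤ μ → xb v = yb v) :
    (∑ l ∈ Finset.Icc 1 μ, (xb l:ℤ)*2^(l-1)) - ∑ l ∈ Finset.Icc 1 μ, (yb l:ℤ)*2^(l-1)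
      = ((xb u:ℤ) - yb u) * 2^(u-1)
        + ∑ l ∈ Finset.Icc 1 (u-1), ((xb l:ℤ) - yb l) * 2^(l-1) := by
  rw [← Finset.sum_sub_distrib]
  simp_rw [← sub_mul]
  have key : ∑ l ∈ Finset.Icc 1 μ, ((xb l:ℤ) - yb l) * 2^(l-1)
      = ∑ l ∈ Finset.Icc 1 u, ((xb l:ℤ) - yb l) * 2^(l-1) := by
    rw [show Finset.Icc 1 μ = Finset.Ioc 0 μ from (Finset.Icc_add_one_left_eq_Ioc 0 μ),
        show Finset.Icc 1 u = Finset.Ioc 0 u from (Finset.Icc_add_one_left_eq_Ioc 0 u),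
        ← Finset.sum_Ioc_consecutive _ (Nat.zero_le u) huμ]
    have hz : ∑ l ∈ Finset.Ioc u μ, ((xb l:ℤ) - yb l) * 2^(l-1) = 0 := by
      apply Finset.sum_eq_zero
      intro v hv
      rw [Finset.mem_Ioc] at hv
      rw [heq v hv.1 hv.2]; ring
    rw [hz, add_zero]
  obtain ⟨t, rfl⟩ : ∃ t, u = t + 1 := ⟨u - 1, by omega⟩
  rw [key, Finset.sum_Icc_succ_top (by omega : 1 ≤ t + 1)]
  have h : t + 1 - 1 = t := rfl
  rw [h]
  ring

theorem stmt_13 (μ : ℕ) (hμ : 1 ≤ μ) (xb yb : ℕ → ℕ)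
    (hxb : ∀ l, xb l ≤ 1) (hyb : ∀ l, yb l ≤ 1)
    (x y : ℕ)
    (hx : x = ∑ l ∈ Finset.Icc 1 μ, xb l * 2 ^ (l - 1))
    (hy : y = ∑ l ∈ Finset.Icc 1 μ, yb l * 2 ^ (l - 1)) :
    (∃ u ∈ Finset.Icc 1 μ,
        (-1 : ℤ) + (xb u : ℤ) - (yb u : ℤ)
          + 3 * ∑ v ∈ Finset.Icc (u + 1) μ,
              (if xb v ≠ yb v then (1 : ℤ) else 0) = 0)
      ↔ x > y := by
  subst hx hy
  have habs := absBound (fun l => (xb l:ℤ) - yb l)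
    (fun l => by
      have h1 := hxb l; have h2 := hyb l
      rw [abs_le]; constructor <;> push_cast <;> omega)
  constructor
  · rintro ⟨u, hu, hz⟩
    rw [Finset.mem_Icc] at hu
    set S := ∑ v ∈ Finset.Icc (u+1) μ, (if xb v ≠ yb v then (1:ℤ) else 0) with hS
    have hSnn : 0 ≤ S := Finset.sum_nonneg (fun v _ => by split <;> norm_num)
    have h1 := hxb u; have h2 := hyb u
    have hSz : S = 0 := by omega
    have hxu : xb u = 1 := by omega
    have hyu : yb u = 0 := by omega
    have heq : ∀ v, u < v → v ≤ μ → xb v = yb v := by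
      intro v hv1 hv2
      have := (Finset.sum_eq_zero_iff_of_nonneg
        (fun w _ => by split <;> norm_num)).mp hSz v (by
          rw [Finset.mem_Icc]; omega)
      by_contra hne
      simp [hne] at this
    have hsplit := splitSum xb yb μ u hu.1 hu.2 heq
    have hR := habs (u - 1)
    rw [abs_le] at hR
    rw [gt_iff_lt, ← Nat.cast_lt (α := ℤ)]
    push_cast
    rw [hxu, hyu] at hsplit
    push_cast at hsplit
    linarith [hR.1]
  · intro hlt
    have hltZ : (∑ l ∈ Finset.Icc 1 μ, (yb l:ℤ) * 2^(l-1))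
        < ∑ l ∈ Finset.Icc 1 μ, (xb l:ℤ) * 2^(l-1) := by
      exact_mod_cast hlt
    set T := (Finset.Icc 1 μ).filter (fun l => xb l ≠ yb l) with hT
    have hne : T.Nonempty := by
      by_contra hemp
      rw [Finset.not_nonempty_iff_eq_empty] at hemp
      have hall : ∀ l ∈ Finset.Icc 1 μ, xb l = yb l := by
        intro l hl
        by_contra hc
        have : l ∈ T := Finset.mem_filter.mpr ⟨hl, hc⟩
        rw [hemp] at this
        exact absurd this (Finset.notMem_empty l)
      have : (∑ l ∈ Finset.Icc 1 μ, (xb l:ℤ) * 2^(l-1))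
          = ∑ l ∈ Finset.Icc 1 μ, (yb l:ℤ) * 2^(l-1) :=
        Finset.sum_congr rfl (fun l hl => by rw [hall l hl])
      omega
    set u := T.max' hne with huDef
    have huT : u ∈ T := T.max'_mem hne
    rw [hT, Finset.mem_filter, Finset.mem_Icc] at huT
    have heq : ∀ v, u < v → v ≤ μ → xb v = yb v := by
      intro v hv1 hv2
      by_contra hc
      have hvT : v ∈ T := Finset.mem_filter.mpr ⟨Finset.mem_Icc.mpr ⟨by omega, hv2⟩, hc⟩
      have := T.le_max' v hvT
      omega
    have hsplit := splitSum xb yb μ u huT.1.1 huT.1.2 heq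
    have hR := habs (u - 1)
    rw [abs_le] at hR
    have h1 := hxb u; have h2 := hyb u
    have hxu : xb u = 1 ∧ yb u = 0 := by
      by_contra hc
      have hxu0 : xb u = 0 ∧ yb u = 1 := by
        have := huT.2; omega
      rw [hxu0.1, hxu0.2] at hsplit
      push_cast at hsplit
      linarith [hR.2]
    refine ⟨u, Finset.mem_Icc.mpr ⟨huT.1.1, huT.1.2⟩, ?_⟩
    have hSz : ∑ v ∈ Finset.Icc (u+1) μ, (if xb v ≠ yb v then (1:ℤ) else 0) = 0 := by
      apply Finset.sum_eq_zero
      intro v hv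
      rw [Finset.mem_Icc] at hv
      simp [heq v (by omega) hv.2]
    rw [hSz, hxu.1, hxu.2]
    norm_num
end

section
/- Let μ ≥ 1 and let x and y be μ-bit integers with bit representations x_μ … x_1 and y_μ … y_1. For u ∈ {1, …, μ} define the integer z_u = 1 + x_u − y_u + 3·Σ_{v=u+1}^{μ} (x_v ⊕ y_v). Then there exists u ∈ {1, …, μ} with z_u = 0 if and only if y > x. -/
open Finset

lemma geom_aux (n : ℕ) : ∑ l ∈ Icc 1 n, 2 ^ (l - 1) = 2 ^ n - 1 := by
  induction n with
  | zero => simp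
  | succ n ih =>
    rw [Finset.sum_Icc_succ_top (by omega : 1 ≤ n + 1), ih]
    have h1 : 1 ≤ 2 ^ n := Nat.one_le_two_pow
    have h2 : 2 ^ (n + 1) = 2 * 2 ^ n := by ring
    simp only [Nat.add_sub_cancel]
    omega

lemma lt_of_split (μ : ℕ) (a b : ℕ → ℕ) (ha : ∀ l, a l ≤ 1)
    (u : ℕ) (h1 : 1 ≤ u) (h2 : u ≤ μ)
    (hau : a u = 0) (hbu : b u = 1)
    (heq : ∀ v ∈ Icc (u + 1) μ, a v = b v) :
    ∑ l ∈ Icc 1 μ, a l * 2 ^ (l - 1) < ∑ l ∈ Icc 1 μ, b l * 2 ^ (l - 1) := by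
  obtain ⟨m, rfl⟩ : ∃ m, u = m + 1 := ⟨u - 1, by omega⟩
  have hsplit : ∀ c : ℕ → ℕ,
      ∑ l ∈ Icc 1 μ, c l * 2 ^ (l - 1)
        = ∑ l ∈ Icc 1 (m + 1), c l * 2 ^ (l - 1)
          + ∑ l ∈ Icc (m + 2) μ, c l * 2 ^ (l - 1) := by
    intro c
    have := Finset.sum_Ioc_consecutive (fun l => c l * 2 ^ (l - 1))
      (Nat.zero_le (m + 1)) h2
    rw [← Finset.Icc_add_one_left_eq_Ioc 0 μ, ← Finset.Icc_add_one_left_eq_Ioc 0 (m + 1),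
      ← Finset.Icc_add_one_left_eq_Ioc (m + 1) μ] at this
    exact this.symm
  rw [hsplit a, hsplit b]
  have hupper : ∑ l ∈ Icc (m + 2) μ, a l * 2 ^ (l - 1)
      = ∑ l ∈ Icc (m + 2) μ, b l * 2 ^ (l - 1) := by
    refine Finset.sum_congr rfl fun v hv => ?_
    rw [heq v hv]
  rw [hupper]
  have hAlow : ∑ l ∈ Icc 1 (m + 1), a l * 2 ^ (l - 1) ≤ 2 ^ m - 1 := by
    rw [Finset.sum_Icc_succ_top (by omega : 1 ≤ m + 1), hau]
    simp only [Nat.zero_mul, Nat.add_zero]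
    calc ∑ l ∈ Icc 1 m, a l * 2 ^ (l - 1)
        ≤ ∑ l ∈ Icc 1 m, 1 * 2 ^ (l - 1) :=
          Finset.sum_le_sum fun l _ => Nat.mul_le_mul_right _ (ha l)
      _ = 2 ^ m - 1 := by simp [geom_aux]
  have hBlow : 2 ^ m ≤ ∑ l ∈ Icc 1 (m + 1), b l * 2 ^ (l - 1) := by
    rw [Finset.sum_Icc_succ_top (by omega : 1 ≤ m + 1), hbu]
    simp only [Nat.one_mul, Nat.add_sub_cancel]
    omega
  have hP : 1 ≤ 2 ^ m := Nat.one_le_two_pow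
  omega

theorem stmt_14 (μ : ℕ) (hμ : 1 ≤ μ) (xb yb : ℕ → ℕ)
    (hxb : ∀ l, xb l ≤ 1) (hyb : ∀ l, yb l ≤ 1)
    (x y : ℕ)
    (hx : x = ∑ l ∈ Finset.Icc 1 μ, xb l * 2 ^ (l - 1))
    (hy : y = ∑ l ∈ Finset.Icc 1 μ, yb l * 2 ^ (l - 1)) :
    (∃ u ∈ Finset.Icc 1 μ,
        (1 : ℤ) + (xb u : ℤ) - (yb u : ℤ)
          + 3 * ∑ v ∈ Finset.Icc (u + 1) μ,
              (if xb v ≠ yb v then (1 : ℤ) else 0) = 0)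
      ↔ y > x := by
  subst hx hy
  constructor
  · rintro ⟨u, hu, hz⟩
    simp only [Finset.mem_Icc] at hu
    set S : ℤ := ∑ v ∈ Finset.Icc (u + 1) μ,
        (if xb v ≠ yb v then (1 : ℤ) else 0) with hS
    have hSnn : 0 ≤ S := Finset.sum_nonneg fun v _ => by positivity
    have hxu := hxb u
    have hyu := hyb u
    have hxu' : (xb u : ℤ) ≤ 1 := by exact_mod_cast hxu
    have hyu' : (yb u : ℤ) ≤ 1 := by exact_mod_cast hyu
    have hxnn : (0 : ℤ) ≤ xb u := Int.natCast_nonneg _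
    have hynn : (0 : ℤ) ≤ yb u := Int.natCast_nonneg _
    have hS0 : S = 0 := by omega
    have hxu0 : (xb u : ℤ) = 0 := by omega
    have hyu1 : (yb u : ℤ) = 1 := by omega
    have heq : ∀ v ∈ Finset.Icc (u + 1) μ, xb v = yb v := by
      intro v hv
      have := (Finset.sum_eq_zero_iff_of_nonneg
        (fun v _ => by positivity : ∀ v ∈ Finset.Icc (u + 1) μ,
          (0 : ℤ) ≤ if xb v ≠ yb v then (1 : ℤ) else 0)).mp hS0 v hv
      by_contra h
      simp [h] at this
    exact lt_of_split μ xb yb hxb u hu.1 hu.2 (by exact_mod_cast hxu0)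
      (by exact_mod_cast hyu1) heq
  · intro hlt
    set T := (Finset.Icc 1 μ).filter (fun l => xb l ≠ yb l) with hT
    have hTne : T.Nonempty := by
      by_contra h
      rw [Finset.not_nonempty_iff_eq_empty, Finset.filter_eq_empty_iff] at h
      have : ∑ l ∈ Finset.Icc 1 μ, xb l * 2 ^ (l - 1)
          = ∑ l ∈ Finset.Icc 1 μ, yb l * 2 ^ (l - 1) := by
        refine Finset.sum_congr rfl fun l hl => ?_
        have := h hl
        simp only [ne_eq, not_not] at this
        rw [this]
      omega
    set u := T.max' hTne with hu
    have huT : u ∈ T := T.max'_mem hTne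
    have huIcc : u ∈ Finset.Icc 1 μ := Finset.mem_filter.mp huT |>.1
    have hune : xb u ≠ yb u := Finset.mem_filter.mp huT |>.2
    simp only [Finset.mem_Icc] at huIcc
    have heq : ∀ v ∈ Finset.Icc (u + 1) μ, xb v = yb v := by
      intro v hv
      simp only [Finset.mem_Icc] at hv
      by_contra h
      have hvT : v ∈ T := Finset.mem_filter.mpr
        ⟨Finset.mem_Icc.mpr ⟨by omega, hv.2⟩, h⟩
      have := T.le_max' v hvT
      omega
    have hcase : xb u = 0 ∧ yb u = 1 := by
      have hx1 := hxb u
      have hy1 := hyb u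
      rcases Nat.lt_or_ge (xb u) (yb u) with h | h
      · omega
      · exfalso
        have : xb u = 1 ∧ yb u = 0 := by omega
        have := lt_of_split μ yb xb hyb u huIcc.1 huIcc.2 this.2 this.1
          (fun v hv => (heq v hv).symm)
        omega
    refine ⟨u, Finset.mem_Icc.mpr huIcc, ?_⟩
    have hS0 : ∑ v ∈ Finset.Icc (u + 1) μ,
        (if xb v ≠ yb v then (1 : ℤ) else 0) = 0 := by
      refine Finset.sum_eq_zero fun v hv => ?_
      simp [heq v hv]
    rw [hS0, hcase.1, hcase.2]
    norm_num
end

section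
/- Let μ ≥ 1, let x and y be distinct μ-bit integers with bit representations x_μ … x_1 and y_μ … y_1, and let δ ∈ {0,1}. Define δ' = 1 if there exists u ∈ {1, …, μ} with (1 − 2δ) + x_u − y_u + 3·Σ_{v=u+1}^{μ} (x_v ⊕ y_v) = 0, and δ' = 0 otherwise. Then δ' ⊕ δ = 1 if and only if x ≤ y. In other words, the two shares δ' and δ produced by the DGK comparison protocol XOR to the comparison bit [x ≤ y]. -/
private lemma geo15 (m : ℕ) : ∑ l ∈ Finset.Ioc 0 m, (2:ℤ) ^ (l-1) = 2 ^ m - 1 := by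
  induction m with
  | zero => simp
  | succ n ih =>
    rw [Finset.sum_Ioc_succ_top (Nat.zero_le _), ih]
    simp only [Nat.add_sub_cancel]
    ring

private lemma bitlt15 (μ u : ℕ) (hu1 : 1 ≤ u) (huμ : u ≤ μ)
    (xb yb : ℕ → ℕ) (hxb : ∀ l, xb l ≤ 1) (hyb : ∀ l, yb l ≤ 1)
    (hxu : xb u = 0) (hyu : yb u = 1)
    (heq : ∀ v, u < v → v ≤ μ → xb v = yb v) :
    (∑ l ∈ Finset.Icc 1 μ, xb l * 2 ^ (l - 1)) <
      ∑ l ∈ Finset.Icc 1 μ, yb l * 2 ^ (l - 1) := by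
  have key : (0:ℤ) < ∑ l ∈ Finset.Icc 1 μ, ((yb l : ℤ) - xb l) * 2 ^ (l-1) := by
    have hsplit : Finset.Icc 1 μ = Finset.Ioc 0 μ := by
      ext l; simp [Nat.lt_iff_add_one_le]
    rw [hsplit, ← Finset.sum_Ioc_consecutive _ (Nat.zero_le u) huμ]
    have h2 : ∑ l ∈ Finset.Ioc u μ, ((yb l : ℤ) - xb l) * 2 ^ (l-1) = 0 := by
      apply Finset.sum_eq_zero
      intro v hv
      simp only [Finset.mem_Ioc] at hv
      rw [heq v hv.1 hv.2]; ring
    rw [h2, add_zero]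
    obtain ⟨u', rfl⟩ : ∃ u', u = u' + 1 := ⟨u - 1, (Nat.succ_pred_eq_of_pos hu1).symm⟩
    rw [Finset.sum_Ioc_succ_top (Nat.zero_le _)]
    have hb : -((2:ℤ)^u' - 1) ≤ ∑ l ∈ Finset.Ioc 0 u', ((yb l : ℤ) - xb l) * 2 ^ (l-1) := by
      have := geo15 u'
      calc -((2:ℤ)^u' - 1) = ∑ l ∈ Finset.Ioc 0 u', -((2:ℤ)^(l-1)) := by
            rw [← this]; simp
        _ ≤ _ := by
            apply Finset.sum_le_sum
            intro l _
            have h1 : (0:ℤ) ≤ (yb l : ℤ) := Int.natCast_nonneg _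
            have h2 : (xb l : ℤ) ≤ 1 := by exact_mod_cast hxb l
            nlinarith [pow_pos (by norm_num : (0:ℤ) < 2) (l-1)]
    have hterm : ((yb (u'+1) : ℤ) - xb (u'+1)) * 2 ^ ((u'+1)-1) = 2 ^ u' := by
      rw [hxu, hyu]; simp
    rw [hterm]
    linarith
  have := Finset.sum_sub_distrib (f := fun l => (yb l : ℤ) * 2 ^ (l-1))
    (g := fun l => (xb l : ℤ) * 2 ^ (l-1)) (s := Finset.Icc 1 μ)
  have key2 : (∑ l ∈ Finset.Icc 1 μ, (xb l : ℤ) * 2 ^ (l-1)) <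
      ∑ l ∈ Finset.Icc 1 μ, (yb l : ℤ) * 2 ^ (l-1) := by
    have : ∑ l ∈ Finset.Icc 1 μ, ((yb l : ℤ) - xb l) * 2 ^ (l-1)
        = (∑ l ∈ Finset.Icc 1 μ, (yb l : ℤ) * 2 ^ (l-1))
          - ∑ l ∈ Finset.Icc 1 μ, (xb l : ℤ) * 2 ^ (l-1) := by
      rw [← Finset.sum_sub_distrib]
      apply Finset.sum_congr rfl
      intro l _; ring
    linarith [this ▸ key]
  exact_mod_cast key2

open Classical in
theorem stmt_15 (μ : ℕ) (hμ : 1 ≤ μ) (xb yb : ℕ → ℕ)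
    (hxb : ∀ l, xb l ≤ 1) (hyb : ∀ l, yb l ≤ 1)
    (x y : ℕ)
    (hx : x = ∑ l ∈ Finset.Icc 1 μ, xb l * 2 ^ (l - 1))
    (hy : y = ∑ l ∈ Finset.Icc 1 μ, yb l * 2 ^ (l - 1))
    (hxy : x ≠ y)
    (δ δ' : ℕ) (hδ : δ ≤ 1)
    (hδ' : δ' = if (∃ u ∈ Finset.Icc 1 μ,
        ((1 : ℤ) - 2 * (δ : ℤ)) + (xb u : ℤ) - (yb u : ℤ)
          + 3 * ∑ v ∈ Finset.Icc (u + 1) μ,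
              (if xb v ≠ yb v then (1 : ℤ) else 0) = 0)
      then 1 else 0) :
    δ' ^^^ δ = 1 ↔ x ≤ y := by
  set S := (Finset.Icc 1 μ).filter (fun l => xb l ≠ yb l) with hS
  have hSne : S.Nonempty := by
    by_contra h
    apply hxy
    rw [hx, hy]
    apply Finset.sum_congr rfl
    intro l hl
    have hll : xb l = yb l := by
      by_contra hne
      exact h ⟨l, Finset.mem_filter.mpr ⟨hl, hne⟩⟩
    rw [hll]
  set u := S.max' hSne with hu
  have huS : u ∈ S := S.max'_mem hSne
  obtain ⟨huIcc, hune⟩ := Finset.mem_filter.mp huS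
  obtain ⟨hu1, huμ⟩ := Finset.mem_Icc.mp huIcc
  have heq : ∀ v, u < v → v ≤ μ → xb v = yb v := by
    intro v hv1 hv2
    by_contra hne
    have hvS : v ∈ S := Finset.mem_filter.mpr
      ⟨Finset.mem_Icc.mpr ⟨le_trans hu1 hv1.le, hv2⟩, hne⟩
    exact absurd (S.le_max' v hvS) (not_le.mpr hv1)
  have hsum0 : ∀ w, u ≤ w →
      ∑ v ∈ Finset.Icc (w + 1) μ, (if xb v ≠ yb v then (1:ℤ) else 0) = 0 := by
    intro w hw
    apply Finset.sum_eq_zero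
    intro v hv
    obtain ⟨hv1, hv2⟩ := Finset.mem_Icc.mp hv
    rw [if_neg]
    simp only [ne_eq, not_not]
    exact heq v (by omega) hv2
  have hbits : (xb u = 0 ∧ yb u = 1) ∨ (xb u = 1 ∧ yb u = 0) := by
    have h1 := hxb u
    have h2 := hyb u
    omega
  -- characterize the existence condition
  have hEiff : (∃ w ∈ Finset.Icc 1 μ,
        ((1 : ℤ) - 2 * (δ : ℤ)) + (xb w : ℤ) - (yb w : ℤ)
          + 3 * ∑ v ∈ Finset.Icc (w + 1) μ,
              (if xb v ≠ yb v then (1 : ℤ) else 0) = 0)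
      ↔ ((δ = 0 ∧ xb u = 0 ∧ yb u = 1) ∨ (δ = 1 ∧ xb u = 1 ∧ yb u = 0)) := by
    constructor
    · rintro ⟨w, hwIcc, hw⟩
      obtain ⟨hw1, hw2⟩ := Finset.mem_Icc.mp hwIcc
      rcases lt_trichotomy w u with hlt | heqw | hgt
      · -- w < u : sum ≥ 1, contradiction
        exfalso
        have hsge : (1:ℤ) ≤ ∑ v ∈ Finset.Icc (w + 1) μ,
            (if xb v ≠ yb v then (1:ℤ) else 0) := by
          have hmem : u ∈ Finset.Icc (w+1) μ := Finset.mem_Icc.mpr ⟨by omega, huμ⟩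
          have := Finset.single_le_sum
            (f := fun v => (if xb v ≠ yb v then (1:ℤ) else 0))
            (fun v _ => by positivity) hmem
          simpa only [if_pos hune] using this
        have hx1 : (xb w : ℤ) ≤ 1 := by exact_mod_cast hxb w
        have hy1 : (yb w : ℤ) ≤ 1 := by exact_mod_cast hyb w
        have hx0 : (0:ℤ) ≤ (xb w : ℤ) := Int.natCast_nonneg _
        have hy0 : (0:ℤ) ≤ (yb w : ℤ) := Int.natCast_nonneg _
        have hd1 : (δ : ℤ) ≤ 1 := by exact_mod_cast hδ
        have hd0 : (0:ℤ) ≤ (δ : ℤ) := Int.natCast_nonneg _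
        linarith
      · rw [heqw] at hw
        rw [hsum0 u le_rfl] at hw
        have hd1 : (δ : ℤ) ≤ 1 := by exact_mod_cast hδ
        have hd0 : (0:ℤ) ≤ (δ : ℤ) := Int.natCast_nonneg _
        rcases hbits with ⟨h1, h2⟩ | ⟨h1, h2⟩
        · left
          refine ⟨?_, h1, h2⟩
          rw [h1, h2] at hw
          push_cast at hw
          omega
        · right
          refine ⟨?_, h1, h2⟩
          rw [h1, h2] at hw
          push_cast at hw
          omega
      · exfalso
        rw [hsum0 w hgt.le] at hw
        have hwb : xb w = yb w := heq w hgt hw2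
        rw [hwb] at hw
        have hd1 : (δ : ℤ) ≤ 1 := by exact_mod_cast hδ
        have hd0 : (0:ℤ) ≤ (δ : ℤ) := Int.natCast_nonneg _
        omega
    · rintro (⟨hd, h1, h2⟩ | ⟨hd, h1, h2⟩) <;>
      · refine ⟨u, huIcc, ?_⟩
        rw [hsum0 u le_rfl, hd, h1, h2]
        norm_num
  -- relate bit comparison to x vs y
  have hxy_lt : xb u = 0 ∧ yb u = 1 → x < y := by
    rintro ⟨h1, h2⟩
    rw [hx, hy]
    exact bitlt15 μ u hu1 huμ xb yb hxb hyb h1 h2 heq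
  have hyx_lt : xb u = 1 ∧ yb u = 0 → y < x := by
    rintro ⟨h1, h2⟩
    rw [hx, hy]
    exact bitlt15 μ u hu1 huμ yb xb hyb hxb h2 h1 (fun v a b => (heq v a b).symm)
  -- finish by cases on δ and bits
  interval_cases δ
  · rcases hbits with hb | hb
    · have hE : δ' = 1 := by rw [hδ', if_pos (hEiff.mpr (Or.inl ⟨rfl, hb⟩))]
      subst hE
      rw [show (1:ℕ) ^^^ 0 = 1 from rfl]
      simpa using (hxy_lt hb).le
    · have hE : δ' = 0 := by
        rw [hδ', if_neg]
        rw [hEiff]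
        simp [hb.1, hb.2]
      subst hE
      rw [show (0:ℕ) ^^^ 0 = 0 from rfl]
      constructor
      · intro h; exact absurd h (by norm_num)
      · intro h; exact absurd h (not_le.mpr (hyx_lt hb))
  · rcases hbits with hb | hb
    · have hE : δ' = 0 := by
        rw [hδ', if_neg]
        rw [hEiff]
        simp [hb.1, hb.2]
      subst hE
      rw [show (0:ℕ) ^^^ 1 = 1 from rfl]
      simpa using (hxy_lt hb).le
    · have hE : δ' = 1 := by rw [hδ', if_pos (hEiff.mpr (Or.inr ⟨rfl, hb⟩))]
      subst hE
      rw [show (1:ℕ) ^^^ 1 = 0 from rfl]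
      constructor
      · intro h; exact absurd h (by norm_num)
      · intro h; exact absurd h (not_le.mpr (hyx_lt hb))
end
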